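/- arXiv:1001.1673 — 3 statements merged into one kernel-verified Lean document; each statement's English description precedes it below -/
import Mathlib

section
/- Let G be a finite abelian group, H₁,...,Hₘ finite-dimensional complex Hilbert spaces, and Φ^μ : G → H_μ functions for μ = 1,...,m. Define the tensor convolution (Φ¹ ⋆ ⋯ ⋆ Φᵐ)(g) = Σ_{g₂,...,gₘ ∈ G} Φ¹(g − g₂ − ⋯ − gₘ) ⊗ Φ²(g₂) ⊗ ⋯ ⊗ Φᵐ(gₘ). Then the Hermitian operator Σ_{g∈G} |(Φ¹⋆⋯⋆Φᵐ)(g)⟩⟨(Φ¹⋆⋯⋆Φᵐ)(g)| on H₁⊗⋯⊗Hₘ is separable. -/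
noncomputable section

/-- The rank-one operator `|u⟩⟨u| : w ↦ ⟪u, w⟫ • u`. -/
def rankOne {E : Type*} [NormedAddCommGroup E] [InnerProductSpace ℂ E] (u : E) : E →L[ℂ] E :=
  (innerSL ℂ u).smulRight u

variable {m : ℕ} {H : Fin (m + 1) → Type*}
  [∀ μ, NormedAddCommGroup (H μ)] [∀ μ, InnerProductSpace ℂ (H μ)]
  {E : Type*} [NormedAddCommGroup E] [InnerProductSpace ℂ E]

/-- The tensor convolution `(Φ¹ ⋆ ⋯ ⋆ Φᵐ)(g) = Σ_{g₂,…,gₘ} Φ¹(g−g₂−⋯−gₘ)⊗Φ²(g₂)⊗⋯⊗Φᵐ(gₘ)`,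
realized through a multilinear map `T` playing the role of the tensor product. -/
def tensorConv {G : Type*} [AddCommGroup G] [Fintype G]
    (T : MultilinearMap ℂ H E) (Φ : ∀ μ, G → H μ) (g : G) : E :=
  ∑ k : Fin m → G, T fun μ => Φ μ (Fin.cons (α := fun _ => G) (g - ∑ j, k j) k μ)

/-- An operator is separable (w.r.t. the tensor structure `T`) if it is a finite sum of
positive multiples of projectors onto simple tensors. -/
def IsSeparableOp (T : MultilinearMap ℂ H E) (A : E →L[ℂ] E) : Prop :=
  ∃ (P : ℕ) (c : Fin P → ℝ) (v : Fin P → ∀ μ, H μ),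
    (∀ p, 0 < c p) ∧ A = ∑ p, (c p : ℂ) • rankOne (T (v p))

/-!
Fourier transform over `G`: for a character `χ`, multilinearity of `T` turns the simple tensor
`T (Σₓ χ x • Φ¹ x, …, Σₓ χ x • Φᵐ x)` into `Σ_g χ g • (Φ¹ ⋆ ⋯ ⋆ Φᵐ)(g)`, because `χ` converts the
sum of the arguments into the product of the coefficients. Orthogonality of the characters then
gives `Σ_g |(Φ¹⋆⋯⋆Φᵐ)(g)⟩⟨(Φ¹⋆⋯⋆Φᵐ)(g)| = |G|⁻¹ Σ_χ |T(…)⟩⟨T(…)|`, a positive combination of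
projectors onto simple tensors.
-/

open ComplexConjugate

lemma AddChar.map_sum_eq_prod {G R ι : Type*} [AddCommMonoid G] [CommMonoid R]
    (χ : AddChar G R) (s : Finset ι) (f : ι → G) :
    χ (∑ i ∈ s, f i) = ∏ i ∈ s, χ (f i) := by
  classical
  induction s using Finset.induction_on with
  | empty => simp
  | insert a s ha ih => rw [Finset.sum_insert ha, Finset.prod_insert ha, map_add_eq_mul, ih]

lemma AddChar.sum_apply_mul_conj_apply {G : Type*} [AddCommGroup G] [Fintype G] [DecidableEq G]
    (a b : G) :
    ∑ χ : AddChar G ℂ, χ a * conj (χ b) = if a = b then (Fintype.card G : ℂ) else 0 := by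
  simp_rw [← AddChar.map_neg_eq_conj, ← AddChar.map_add_eq_mul, ← sub_eq_add_neg,
    AddChar.sum_apply_eq_ite, sub_eq_zero]

lemma rankOne_eq_innerProductSpace_rankOne (u : E) :
    rankOne u = InnerProductSpace.rankOne ℂ u u :=
  rfl

lemma sum_addChar_rankOne_sum_smul {G : Type*} [AddCommGroup G] [Fintype G] (v : G → E) :
    ∑ χ : AddChar G ℂ, rankOne (∑ g, χ g • v g) = (Fintype.card G : ℂ) • ∑ g, rankOne (v g) := by
  classical
  have expand : ∀ χ : AddChar G ℂ, rankOne (∑ g, χ g • v g)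
      = ∑ h, ∑ g, (χ g * conj (χ h)) • InnerProductSpace.rankOne ℂ (v g) (v h) := by
    intro χ
    simp [rankOne_eq_innerProductSpace_rankOne, mul_smul, smul_comm (χ _)]
  calc ∑ χ : AddChar G ℂ, rankOne (∑ g, χ g • v g)
      = ∑ h, ∑ g, (∑ χ : AddChar G ℂ, χ g * conj (χ h)) •
          InnerProductSpace.rankOne ℂ (v g) (v h) := by
        simp_rw [expand, Finset.sum_smul]
        rw [Finset.sum_comm]
        exact Finset.sum_congr rfl fun _ _ => Finset.sum_comm
    _ = (Fintype.card G : ℂ) • ∑ g, rankOne (v g) := by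
        simp_rw [AddChar.sum_apply_mul_conj_apply, ite_smul, zero_smul, Finset.sum_ite_eq',
          Finset.mem_univ, if_true, Finset.smul_sum, rankOne_eq_innerProductSpace_rankOne]

lemma sum_addChar_smul_tensorConv {G : Type*} [AddCommGroup G] [Fintype G]
    (T : MultilinearMap ℂ H E) (Φ : ∀ μ, G → H μ) (χ : AddChar G ℂ) :
    ∑ g, χ g • tensorConv T Φ g = T fun μ => ∑ x, χ x • Φ μ x := by
  have expand : (T fun μ => ∑ x, χ x • Φ μ x)
      = ∑ h : Fin (m + 1) → G, χ (∑ μ, h μ) • T fun μ => Φ μ (h μ) := by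
    simp_rw [MultilinearMap.map_sum, MultilinearMap.map_smul_univ, AddChar.map_sum_eq_prod]
  rw [expand, ← (Fin.consEquiv fun _ => G).sum_comp, Fintype.sum_prod_type, Finset.sum_comm]
  simp only [tensorConv, Finset.smul_sum]
  rw [Finset.sum_comm]
  refine Finset.sum_congr rfl fun k _ => ?_
  refine Fintype.sum_equiv (Equiv.subRight (∑ j, k j)) _ _ fun g => ?_
  simp [Fin.consEquiv, Fin.sum_cons]

lemma isSeparableOp_sum_smul_rankOne {ι : Type*} [Fintype ι] (T : MultilinearMap ℂ H E)
    (c : ι → ℝ) (hc : ∀ i, 0 < c i) (v : ι → ∀ μ, H μ) :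
    IsSeparableOp T (∑ i, (c i : ℂ) • rankOne (T (v i))) :=
  let e := (Fintype.equivFin ι).symm
  ⟨Fintype.card ι, c ∘ e, v ∘ e, fun _ => hc _,
    (e.sum_comp fun i => (c i : ℂ) • rankOne (T (v i))).symm⟩

theorem sum_rankOne_tensorConv_isSeparable_general
    {G : Type*} [AddCommGroup G] [Fintype G]
    (T : MultilinearMap ℂ H E)
    (Φ : ∀ μ, G → H μ) :
    IsSeparableOp T (∑ g : G, rankOne (tensorConv T Φ g)) := by
  have hG : (0 : ℝ) < Fintype.card G := Nat.cast_pos.mpr Fintype.card_pos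
  have parseval := sum_addChar_rankOne_sum_smul (tensorConv T Φ)
  simp_rw [sum_addChar_smul_tensorConv] at parseval
  convert isSeparableOp_sum_smul_rankOne T (fun _ : AddChar G ℂ => (Fintype.card G : ℝ)⁻¹)
    (fun _ => inv_pos.mpr hG) (fun χ μ => ∑ x, χ x • Φ μ x) using 1
  rw [← Finset.smul_sum, parseval, smul_smul, Complex.ofReal_inv, Complex.ofReal_natCast,
    inv_mul_cancel₀ (by exact_mod_cast hG.ne'), one_smul]

/-- The operator `Σ_g |(Φ¹⋆⋯⋆Φᵐ)(g)⟩⟨(Φ¹⋆⋯⋆Φᵐ)(g)|` is separable. -/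
theorem sum_rankOne_tensorConv_isSeparable
    [∀ μ, FiniteDimensional ℂ (H μ)] [FiniteDimensional ℂ E]
    {G : Type*} [AddCommGroup G] [Fintype G]
    (T : MultilinearMap ℂ H E)
    (hT : ∀ v w : ∀ μ, H μ, (inner ℂ (T v) (T w) : ℂ) = ∏ μ, (inner ℂ (v μ) (w μ) : ℂ))
    (Φ : ∀ μ, G → H μ) :
    IsSeparableOp T (∑ g : G, rankOne (tensorConv T Φ g)) :=
  sum_rankOne_tensorConv_isSeparable_general T Φ
end
end

section
/- Let H = H₁ ⊗ ⋯ ⊗ Hₘ be a finite-dimensional Hilbert tensor product. A Hermitian operator A on H is separable if and only if L(A) ≥ 0 for every real linear functional L on the space of Hermitian operators that is nonnegative on all separable projectors |v¹⊗⋯⊗vᵐ⟩⟨v¹⊗⋯⊗vᵐ|. -/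
/-!
The separable operators are the convex cone generated by the projectors `rankOne (T v)` (zero
coefficients are harmless, since this set of projectors is stable under nonnegative scaling), so
the theorem says that this cone is its own double dual. By Farkas' lemma this holds as soon as the
cone is closed. The cone is generated by the projectors onto simple tensors of unit vectors; by
`hT` the map `T` is norm-multiplicative, hence continuous, so these form a compact set `K`, and the
trace equals `1` on `K`, so `0 ∉ conv K`. By Carathéodory `conv K` is compact, and the cone over
a compact convex set avoiding `0` is closed.
-/

noncomputable section

variable {m : ℕ} {H : Fin (m + 1) → Type*}
  [∀ μ, NormedAddCommGroup (H μ)] [∀ μ, InnerProductSpace ℂ (H μ)]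
  {E : Type*} [NormedAddCommGroup E] [InnerProductSpace ℂ E]

open Set

section ConvexGeometry

variable {F : Type*} [AddCommGroup F] [Module ℝ F]

theorem PointedCone.nonneg_of_mem_hull {s : Set F} (L : F →ₗ[ℝ] ℝ) (hL : ∀ x ∈ s, 0 ≤ L x)
    {x : F} (hx : x ∈ PointedCone.hull ℝ s) : 0 ≤ L x := by
  induction hx using Submodule.span_induction with
  | mem x hx => exact hL x hx
  | zero => simp
  | add x y _ _ hx hy => rw [map_add]; exact add_nonneg hx hy
  | smul c x _ hx =>
    change 0 ≤ L ((c : ℝ) • x)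
    rw [map_smul, smul_eq_mul]
    exact mul_nonneg c.2 hx

theorem PointedCone.eq_zero_or_eq_smul_convexHull_of_mem_hull {K : Set F} {x : F}
    (hx : x ∈ PointedCone.hull ℝ K) :
    x = 0 ∨ ∃ t : ℝ, 0 < t ∧ ∃ y ∈ convexHull ℝ K, x = t • y := by
  obtain ⟨n, c, g, rfl⟩ := Submodule.mem_span_set'.1 hx
  set t : ℝ := ∑ i, (c i : ℝ)
  rcases (Finset.sum_nonneg fun i _ => (c i).2 : 0 ≤ t).eq_or_lt with ht | ht
  · left
    have hc : ∀ i, c i = 0 := fun i => NNReal.coe_eq_zero.1 <|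
      (Finset.sum_eq_zero_iff_of_nonneg fun i _ => (c i).2).1 ht.symm i (Finset.mem_univ i)
    simp [hc]
  · refine Or.inr ⟨t, ht, Finset.univ.centerMass (fun i => (c i : ℝ)) (fun i => (g i : F)),
      Finset.univ.centerMass_mem_convexHull (fun i _ => (c i).2) ht fun i _ => (g i).2, ?_⟩
    rw [Finset.centerMass, smul_inv_smul₀ ht.ne']
    rfl

variable [TopologicalSpace F] [IsTopologicalAddGroup F] [ContinuousSMul ℝ F]

theorem isCompact_convexHull [FiniteDimensional ℝ F] {K : Set F} (hK : IsCompact K) :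
    IsCompact (convexHull ℝ K) := by
  set combo : (k : ℕ) → (Fin k → ℝ) × (Fin k → F) → F := fun k p => ∑ i, p.1 i • p.2 i
  have hcombo : convexHull ℝ K = ⋃ k ∈ Finset.range (Module.finrank ℝ F + 2),
      combo k '' (stdSimplex ℝ (Fin k) ×ˢ univ.pi fun _ => K) := by
    refine Subset.antisymm (fun x hx => ?_) ?_
    · obtain ⟨ι, _, z, w, hzK, hz, hw, hw1, rfl⟩ := eq_pos_convex_span_of_mem_convexHull hx
      have hcard : Fintype.card ι < Module.finrank ℝ F + 2 :=
        Nat.lt_succ_of_le (hz.card_le_finrank_succ.trans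
          (Nat.succ_le_succ (Submodule.finrank_le _)))
      set e := Fintype.equivFin ι
      refine mem_biUnion (Finset.mem_range.2 hcard) ⟨(w ∘ e.symm, z ∘ e.symm), ⟨⟨?_, ?_⟩, ?_⟩, ?_⟩
      · exact fun i => (hw _).le
      · rw [← hw1]; exact Fintype.sum_equiv e.symm _ _ fun _ => rfl
      · exact fun i _ => hzK (mem_range_self _)
      · exact Fintype.sum_equiv e.symm _ _ fun _ => rfl
    · refine iUnion₂_subset fun k _ => ?_
      rintro _ ⟨⟨w, z⟩, ⟨⟨hw, hw1⟩, hz⟩, rfl⟩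
      exact (convex_convexHull ℝ K).sum_mem (fun i _ => hw i) hw1
        fun i _ => subset_convexHull ℝ K (hz i (mem_univ i))
  rw [hcombo]
  refine (Finset.range _).isCompact_biUnion fun k _ =>
    (isCompact_stdSimplex ℝ (Fin k) |>.prod (isCompact_univ_pi fun _ => hK)).image ?_
  fun_prop

end ConvexGeometry

theorem PointedCone.isClosed_hull_of_isCompact {F : Type*} [NormedAddCommGroup F]
    [NormedSpace ℝ F] [FiniteDimensional ℝ F] {K : Set F} (hK : IsCompact K)
    (h0 : (0 : F) ∉ convexHull ℝ K) : IsClosed (PointedCone.hull ℝ K : Set F) := by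
  set C := PointedCone.hull ℝ K
  set Q := convexHull ℝ K
  have hQ : IsCompact Q := isCompact_convexHull hK
  obtain ⟨r, hr, hball⟩ := Metric.mem_nhds_iff.1 (hQ.isClosed.isOpen_compl.mem_nhds h0)
  have hQr : ∀ y ∈ Q, r ≤ ‖y‖ := fun y hy => by
    by_contra! h
    exact hball (mem_ball_zero_iff.2 h) hy
  have hQC : Q ⊆ C := convexHull_min PointedCone.subset_hull C.convex
  refine isClosed_of_closure_subset fun z hz => ?_
  -- Near `z`, a point `t • y` of `C` has `t ≤ (‖z‖ + 1) / r`, so it lies in the compact set `P`.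
  set P : Set F := insert 0 ((fun p : ℝ × F => p.1 • p.2) '' (Icc 0 ((‖z‖ + 1) / r) ×ˢ Q))
  have hP : IsCompact P := ((isCompact_Icc.prod hQ).image (by fun_prop)).insert 0
  have hPC : P ⊆ C := by
    rintro _ (rfl | ⟨⟨t, y⟩, ⟨⟨ht, -⟩, hy⟩, rfl⟩)
    · exact C.zero_mem
    · exact C.smul_mem ht (hQC hy)
  have hCP : Metric.ball 0 (‖z‖ + 1) ∩ C ⊆ P := by
    rintro x ⟨hxz, hxC⟩
    obtain rfl | ⟨t, ht, y, hy, rfl⟩ :=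
      PointedCone.eq_zero_or_eq_smul_convexHull_of_mem_hull hxC
    · exact mem_insert _ _
    refine mem_insert_of_mem _
      (mem_image_of_mem _ (mk_mem_prod (mem_Icc.2 ⟨ht.le, (le_div_iff₀ hr).2 ?_⟩) hy))
    rw [mem_ball_zero_iff, norm_smul, Real.norm_of_nonneg ht.le] at hxz
    nlinarith [hQr y hy]
  have := Metric.isOpen_ball.inter_closure ⟨mem_ball_zero_iff.2 (lt_add_one _), hz⟩
  exact hPC (closure_minimal hCP hP.isClosed this)

theorem rankOne_smul (a : ℂ) (u : E) : rankOne (a • u) = (‖a‖ ^ 2) • rankOne u := by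
  ext w
  simp only [rankOne, ContinuousLinearMap.smulRight_apply, innerSL_apply_apply, inner_smul_left,
    FunLike.coe_smul, Pi.smul_apply, smul_smul]
  rw [← Complex.coe_smul, Complex.ofReal_pow, ← Complex.conj_mul' a, smul_smul, mul_right_comm]

theorem continuous_rankOne : Continuous fun u : E => rankOne u := by
  unfold rankOne; fun_prop

theorem trace_rankOne [FiniteDimensional ℂ E] (u : E) :
    LinearMap.trace ℂ E (rankOne u) = (‖u‖ ^ 2 : ℂ) := by
  simp [rankOne]

def separableCone (T : MultilinearMap ℂ H E) : PointedCone ℝ (E →L[ℂ] E) :=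
  PointedCone.hull ℝ (range fun v => rankOne (T v))

section SimpleTensors

variable {T : MultilinearMap ℂ H E}

theorem smul_rankOne_apply_mem_range {c : ℝ} (hc : 0 ≤ c) (v : ∀ μ, H μ) :
    c • rankOne (T v) ∈ range fun v => rankOne (T v) := by
  classical
  refine ⟨Function.update v 0 (((√c : ℝ) : ℂ) • v 0), ?_⟩
  change rankOne _ = _
  rw [T.map_update_smul, Function.update_eq_self, rankOne_smul, Complex.norm_real,
    Real.norm_of_nonneg (Real.sqrt_nonneg c), Real.sq_sqrt hc]

theorem isSeparableOp_iff_mem_separableCone (A : E →L[ℂ] E) :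
    IsSeparableOp T A ↔ A ∈ separableCone T := by
  constructor
  · rintro ⟨P, c, v, hc, rfl⟩
    refine Submodule.sum_mem _ fun p _ => PointedCone.subset_hull ?_
    rw [Complex.coe_smul]
    exact smul_rankOne_apply_mem_range (hc p).le (v p)
  · intro hA
    obtain ⟨n, c, g, rfl⟩ := Submodule.mem_span_set'.1 hA
    choose v hv using fun i => (g i).2
    choose w hw using fun i => smul_rankOne_apply_mem_range (T := T) (c i).2 (v i)
    refine ⟨n, 1, w, fun _ => one_pos, Finset.sum_congr rfl fun i _ => ?_⟩
    rw [Pi.one_apply, Complex.ofReal_one, one_smul, ← hv i]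
    exact (hw i).symm

theorem norm_apply_eq_prod_norm
    (hT : ∀ v w : ∀ μ, H μ, (inner ℂ (T v) (T w) : ℂ) = ∏ μ, (inner ℂ (v μ) (w μ) : ℂ))
    (v : ∀ μ, H μ) : ‖T v‖ = ∏ μ, ‖v μ‖ := by
  have hsq := hT v v
  simp only [inner_self_eq_norm_sq_to_K, Finset.prod_pow] at hsq
  exact (pow_left_inj₀ (norm_nonneg _) (by positivity) two_ne_zero).1 (by exact_mod_cast hsq)

theorem continuous_of_inner_apply_eq_prod
    (hT : ∀ v w : ∀ μ, H μ, (inner ℂ (T v) (T w) : ℂ) = ∏ μ, (inner ℂ (v μ) (w μ) : ℂ)) :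
    Continuous T :=
  (T.mkContinuous 1 fun v => (norm_apply_eq_prod_norm hT v).trans_le (one_mul _).ge).cont

theorem separableCone_eq_hull_sphere :
    separableCone T = PointedCone.hull ℝ
      ((fun v => rankOne (T v)) '' univ.pi fun μ => Metric.sphere (0 : H μ) 1) := by
  refine le_antisymm (Submodule.span_le.2 ?_) (Submodule.span_mono (image_subset_range _ _))
  rintro _ ⟨v, rfl⟩
  change rankOne (T v) ∈ _
  rcases em (∃ μ, v μ = 0) with ⟨μ, hμ⟩ | hv
  · simp [T.map_coord_zero μ hμ, rankOne]
  · replace hv : ∀ μ, v μ ≠ 0 := fun μ h => hv ⟨μ, h⟩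
    set w : ∀ μ, H μ := fun μ => (‖v μ‖⁻¹ : ℂ) • v μ
    have hvw : v = fun μ => (‖v μ‖ : ℂ) • w μ := funext fun μ => by
      simp [w, smul_smul, hv μ]
    have hTv : rankOne (T v) = ‖∏ μ, (‖v μ‖ : ℂ)‖ ^ 2 • rankOne (T w) := by
      conv_lhs => rw [hvw, T.map_smul_univ, rankOne_smul]
    rw [hTv]
    refine PointedCone.smul_mem _ (sq_nonneg _) (PointedCone.subset_hull ⟨w, fun μ _ => ?_, rfl⟩)
    exact mem_sphere_zero_iff_norm.2 (norm_smul_inv_norm (hv μ))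

theorem isClosed_separableCone [∀ μ, FiniteDimensional ℂ (H μ)] [FiniteDimensional ℂ E]
    (hT : ∀ v w : ∀ μ, H μ, (inner ℂ (T v) (T w) : ℂ) = ∏ μ, (inner ℂ (v μ) (w μ) : ℂ)) :
    IsClosed (separableCone T : Set (E →L[ℂ] E)) := by
  rw [separableCone_eq_hull_sphere]
  refine PointedCone.isClosed_hull_of_isCompact
    ((isCompact_univ_pi fun μ => isCompact_sphere 0 1).image
      (continuous_rankOne.comp (continuous_of_inner_apply_eq_prod hT))) fun h0 => ?_
  set τ := (LinearMap.trace ℂ E ∘ₗ ContinuousLinearMap.coeLM ℂ).restrictScalars ℝ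
  have hK : (fun v => rankOne (T v)) '' univ.pi (fun μ => Metric.sphere (0 : H μ) 1) ⊆
      τ ⁻¹' {1} := by
    rintro _ ⟨v, hv, rfl⟩
    have hTv : ‖T v‖ = 1 := by
      rw [norm_apply_eq_prod_norm hT]
      exact Finset.prod_eq_one fun μ _ => mem_sphere_zero_iff_norm.1 (hv μ (mem_univ μ))
    simp [τ, trace_rankOne, hTv]
  simpa [τ] using convexHull_min hK ((convex_singleton 1).linear_preimage τ) h0

end SimpleTensors

theorem isSeparableOp_iff_dual_nonneg_general
    [∀ μ, FiniteDimensional ℂ (H μ)] [FiniteDimensional ℂ E]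
    (T : MultilinearMap ℂ H E)
    (hT : ∀ v w : ∀ μ, H μ, (inner ℂ (T v) (T w) : ℂ) = ∏ μ, (inner ℂ (v μ) (w μ) : ℂ))
    (A : E →L[ℂ] E) :
    IsSeparableOp T A ↔
      ∀ L : (E →L[ℂ] E) →ₗ[ℝ] ℝ,
        (∀ v : ∀ μ, H μ, 0 ≤ L (rankOne (T v))) → 0 ≤ L A := by
  rw [isSeparableOp_iff_mem_separableCone]
  refine ⟨fun hA L hL => PointedCone.nonneg_of_mem_hull L (by simpa using hL) hA, fun hL => ?_⟩
  by_contra hA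
  obtain ⟨f, hfC, hfA⟩ :=
    ProperCone.hyperplane_separation_point ⟨separableCone T, isClosed_separableCone hT⟩ hA
  exact hfA.not_ge (hL f.toLinearMap fun v => hfC _ (PointedCone.subset_hull ⟨v, rfl⟩))

/-- A Hermitian operator `A` is separable iff `L(A) ≥ 0` for every real
linear functional `L` which is nonnegative on all separable projectors. -/
theorem isSeparableOp_iff_dual_nonneg
    [∀ μ, FiniteDimensional ℂ (H μ)] [FiniteDimensional ℂ E]
    (T : MultilinearMap ℂ H E)
    (hT : ∀ v w : ∀ μ, H μ, (inner ℂ (T v) (T w) : ℂ) = ∏ μ, (inner ℂ (v μ) (w μ) : ℂ))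
    (A : E →L[ℂ] E) (hA : ContinuousLinearMap.adjoint A = A) :
    IsSeparableOp T A ↔
      ∀ L : (E →L[ℂ] E) →ₗ[ℝ] ℝ,
        (∀ v : ∀ μ, H μ, 0 ≤ L (rankOne (T v))) → 0 ≤ L A :=
  isSeparableOp_iff_dual_nonneg_general T hT A

end
end

section
/- Let n ≥ 1, G = ℤ/nℤ, m ≥ 2, and for each μ = 1,...,m let (e^μ_g)_{g∈G} be an orthonormal family in a finite-dimensional complex Hilbert space H_μ. Define v^μ : G → H_μ by v^μ(g) = e^μ_g. Then for every g ∈ G, the partial trace over H₂⊗⋯⊗Hₘ of the projector |(v¹⋆⋯⋆vᵐ)(g)⟩⟨(v¹⋆⋯⋆vᵐ)(g)| equals n^{m−2} times the orthogonal projection onto the span of (e¹_k)_{k∈G} in H₁ (which is n^{m−2}·Id if dim H₁ = n). -/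
/-! Splitting off the first tensor factor,
`(v¹⋆⋯⋆vᵐ)(g) = ∑_k e¹_{g - ∑ k} ⊗ (e²_{k₁} ⊗ ⋯ ⊗ eᵐ_{k_{m-1}})`. The product vectors in the
second factor form an orthonormal family indexed by `k`, so the partial trace is
`∑_k |e¹_{g - ∑ k}⟩⟨e¹_{g - ∑ k}|`, and every `c ∈ G` equals `g - ∑ k` for exactly
`n^{m-2}` tuples `k`. -/

noncomputable section

variable {m : ℕ} {ι : Fin (m + 2) → Type*} [∀ μ, Fintype (ι μ)] [∀ μ, DecidableEq (ι μ)]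

/-- The coordinates of the tensor convolution `(v¹⋆⋯⋆vᵐ)(g)` of the maps
`v^μ = e^μ : G → H_μ`, where `H_μ = EuclideanSpace ℂ (ι μ)` and the `m+2`-fold tensor
product is realized as `EuclideanSpace ℂ (Π μ, ι μ)`. -/
def tensorConvCoord {n : ℕ} [NeZero n] (e : ∀ μ, ZMod n → EuclideanSpace ℂ (ι μ))
    (g : ZMod n) : (∀ μ, ι μ) → ℂ :=
  fun i => ∑ k : Fin (m + 1) → ZMod n,
    ∏ μ, e μ (Fin.cons (α := fun _ => ZMod n) (g - ∑ j, k j) k μ) (i μ)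

/-- The matrix of the rank-one operator `|u⟩⟨u|` in coordinates. -/
def rankOneMatrix {I : Type*} (u : I → ℂ) : Matrix I I ℂ :=
  fun p q => u p * (starRingEnd ℂ) (u q)

/-- The partial trace over all but the first tensor factor: the unique linear map with
`Tr₂…ₘ(A ⊗ B) = A · Tr B`. -/
def partialTraceFirst (M : Matrix (∀ μ, ι μ) (∀ μ, ι μ) ℂ) : Matrix (ι 0) (ι 0) ℂ :=
  fun a b => ∑ t : ∀ j : Fin (m + 1), ι j.succ,
    M (Fin.cons (α := ι) a t) (Fin.cons (α := ι) b t)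

open Finset ComplexConjugate

lemma Fintype.sum_fin_succ_pi_sub_sum {G M : Type*} [AddCommGroup G] [Fintype G]
    [AddCommMonoid M] (m : ℕ) (F : G → M) (g : G) :
    ∑ k : Fin (m + 1) → G, F (g - ∑ j, k j) = Fintype.card G ^ m • ∑ c, F c := by
  rw [← (Fin.consEquiv fun _ => G).sum_comp, Fintype.sum_prod_type, sum_comm]
  have hshift (s : G) : ∑ x : G, F (g - (x + s)) = ∑ c, F c :=
    Fintype.sum_equiv ((Equiv.addRight s).trans (Equiv.subLeft g)) _ _ fun _ => rfl
  simp [Fin.consEquiv, Fin.sum_univ_succ, hshift]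

section
variable {𝕜 : Type*} [RCLike 𝕜]

lemma Orthonormal.sum_mul_conj_eq_ite {K ι : Type*} [Fintype ι] [DecidableEq K]
    {v : K → EuclideanSpace 𝕜 ι} (hv : Orthonormal 𝕜 v) (x y : K) :
    ∑ s, v x s * conj (v y s) = if x = y then 1 else 0 := by
  rw [← if_congr eq_comm rfl rfl, ← orthonormal_iff_ite.mp hv y x, PiLp.inner_apply]
  simp

lemma orthonormal_pi_prod {J : Type*} [Fintype J] [DecidableEq J] {K : J → Type*}
    {κ : J → Type*} [∀ j, Fintype (κ j)] [∀ j, DecidableEq (K j)]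
    {f : ∀ j, K j → EuclideanSpace 𝕜 (κ j)} (hf : ∀ j, Orthonormal 𝕜 (f j)) :
    Orthonormal 𝕜 fun k : ∀ j, K j =>
      (WithLp.toLp 2 fun t : ∀ j, κ j => ∏ j, f j (k j) (t j) : EuclideanSpace 𝕜 (∀ j, κ j)) := by
  rw [orthonormal_iff_ite]
  intro k k'
  rw [PiLp.inner_apply]
  simp only [RCLike.inner_apply, map_prod, ← prod_mul_distrib]
  rw [← Fintype.prod_sum fun j s => f j (k' j) s * conj (f j (k j) s)]
  simp only [(hf _).sum_mul_conj_eq_ite, Finset.prod_boole]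
  simp [funext_iff, eq_comm]

lemma Orthonormal.sum_lincomb_mul_conj_lincomb {K T : Type*} [Fintype K] [Fintype T]
    {v : K → EuclideanSpace 𝕜 T} (hv : Orthonormal 𝕜 v) (x y : K → 𝕜) :
    ∑ t, (∑ k, x k * v k t) * conj (∑ k, y k * v k t) = ∑ k, x k * conj (y k) := by
  have h := hv.inner_sum y x univ
  rw [PiLp.inner_apply] at h
  simpa [mul_comm] using h

end

lemma tensorConvCoord_cons {m : ℕ} {ι : Fin (m + 2) → Type*} {n : ℕ} [NeZero n]
    (e : ∀ μ, ZMod n → EuclideanSpace ℂ (ι μ)) (g : ZMod n) (a : ι 0)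
    (t : ∀ j : Fin (m + 1), ι j.succ) :
    tensorConvCoord e g (Fin.cons (α := ι) a t)
      = ∑ k : Fin (m + 1) → ZMod n, e 0 (g - ∑ j, k j) a * ∏ j, e j.succ (k j) (t j) :=
  Finset.sum_congr rfl fun _ _ => Fin.prod_univ_succ _

/-- For `v^μ(g) = e^μ_g` with `(e^μ_g)_{g ∈ ℤ/n}` orthonormal families
(in `m+2 ≥ 2` factors), the partial trace over all but the first factor of
`|(v¹⋆⋯⋆vᵐ)(g)⟩⟨(v¹⋆⋯⋆vᵐ)(g)|` equals `n^{(m+2)−2}` times the orthogonal projection onto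
the span of `(e¹_k)_{k ∈ ℤ/n}`. -/
theorem partialTrace_rankOne_tensorConv
    {n : ℕ} [NeZero n] (e : ∀ μ, ZMod n → EuclideanSpace ℂ (ι μ))
    (he : ∀ μ, Orthonormal ℂ (e μ)) (g : ZMod n) :
    partialTraceFirst (rankOneMatrix (tensorConvCoord e g))
      = ((n : ℂ) ^ m) • ∑ k : ZMod n, rankOneMatrix (fun a => e 0 k a) := by
  ext a b
  have hsucc : Orthonormal ℂ fun k : Fin (m + 1) → ZMod n =>
      (WithLp.toLp 2 fun t : ∀ j : Fin (m + 1), ι j.succ => ∏ j, e j.succ (k j) (t j) :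
        EuclideanSpace ℂ (∀ j : Fin (m + 1), ι j.succ)) :=
    orthonormal_pi_prod fun j => he j.succ
  calc partialTraceFirst (rankOneMatrix (tensorConvCoord e g)) a b
      = ∑ k : Fin (m + 1) → ZMod n, e 0 (g - ∑ j, k j) a * conj (e 0 (g - ∑ j, k j) b) := by
        simpa only [partialTraceFirst, rankOneMatrix, tensorConvCoord_cons] using
          hsucc.sum_lincomb_mul_conj_lincomb (fun k => e 0 (g - ∑ j, k j) a)
            (fun k => e 0 (g - ∑ j, k j) b)
    _ = (n : ℂ) ^ m * ∑ c, e 0 c a * conj (e 0 c b) := by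
        rw [Fintype.sum_fin_succ_pi_sub_sum m (fun c => e 0 c a * conj (e 0 c b)), ZMod.card,
          nsmul_eq_mul, Nat.cast_pow]
    _ = _ := by simp [rankOneMatrix, Matrix.sum_apply]
end
end
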